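/- For all S, T ∈ 𝔖, S ∼ T if and only if m_S(v) = m_T(v) for every vertex v ∈ Γ₀. -/

import Mathlib

namespace KP

/-! ## Quivers on a fixed vertex set `Fin n`.

An orientation is encoded by `Λ : Fin n → Fin n → ℕ`, where `Λ a b` is the number of
arrows from `a` to `b`.  The underlying graph is recorded by `edges Λ a b = Λ a b + Λ b a`. -/

/-- The orientation `σ_x Λ` obtained by reversing every arrow incident with `x`. -/
def flipO {n : ℕ} (x : Fin n) (Λ : Fin n → Fin n → ℕ) : Fin n → Fin n → ℕ :=
  fun a b => if a = x ∨ b = x then Λ b a else Λ a b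

/-- Number of edges of the underlying graph joining `a` and `b`. -/
def edges {n : ℕ} (Λ : Fin n → Fin n → ℕ) (a b : Fin n) : ℕ := Λ a b + Λ b a

/-- `x` is a sink: no arrow starts at `x`. -/
def IsSink {n : ℕ} (Λ : Fin n → Fin n → ℕ) (x : Fin n) : Prop := ∀ y, Λ x y = 0

/-- `S` is a `(+)`-admissible sequence of vertices on `(Γ, Λ)`. -/
def Admissible {n : ℕ} (Λ : Fin n → Fin n → ℕ) : List (Fin n) → Prop
  | [] => True
  | x :: xs => IsSink Λ x ∧ Admissible (flipO x Λ) xs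

/-- The orientation `Λ^S`. -/
def orientAfter {n : ℕ} (Λ : Fin n → Fin n → ℕ) : List (Fin n) → (Fin n → Fin n → ℕ)
  | [] => Λ
  | x :: xs => orientAfter (flipO x Λ) xs

/-- Elementary move: interchange two consecutive vertices not joined by an edge. -/
inductive SwapRel {n : ℕ} (E : Fin n → Fin n → ℕ) : List (Fin n) → List (Fin n) → Prop
  | swap (l₁ l₂ : List (Fin n)) (a b : Fin n) (h : E a b = 0) :
      SwapRel E (l₁ ++ a :: b :: l₂) (l₁ ++ b :: a :: l₂)

/-- The equivalence `∼` on sequences of vertices: reflexive–transitive closure of the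
(symmetric) relation `SwapRel`. -/
def Sim {n : ℕ} (E : Fin n → Fin n → ℕ) : List (Fin n) → List (Fin n) → Prop :=
  Relation.ReflTransGen (SwapRel E)

/-- The preorder `S ⪯ T` : `T ∼ S ++ U` for some `(+)`-admissible sequence `U` on `(Γ, Λ^S)`. -/
def Preceq {n : ℕ} (Λ : Fin n → Fin n → ℕ) (S T : List (Fin n)) : Prop :=
  ∃ U, Admissible (orientAfter Λ S) U ∧ Sim (edges Λ) T (S ++ U)

/-- Support of a sequence of vertices. -/
def suppOf {n : ℕ} (S : List (Fin n)) : Set (Fin n) := {v | v ∈ S}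

/-- The partial order on vertices: `x ≤ y` iff there is a path from `x` to `y` in `(Γ, Λ)`. -/
def PathLE {n : ℕ} (Λ : Fin n → Fin n → ℕ) (x y : Fin n) : Prop :=
  Relation.ReflTransGen (fun a b => Λ a b ≠ 0) x y

/-- A filter (up-closed set) of the poset `(Γ₀, Λ)`. -/
def IsFilter {n : ℕ} (Λ : Fin n → Fin n → ℕ) (F : Set (Fin n)) : Prop :=
  ∀ x ∈ F, ∀ y, PathLE Λ x y → y ∈ F

/-- The principal filter `⟨x⟩`. -/
def upSet {n : ℕ} (Λ : Fin n → Fin n → ℕ) (x : Fin n) : Set (Fin n) := {y | PathLE Λ x y}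

/-- The hull `H_Λ(F)`: the smallest filter containing `F` and every vertex joined
by an edge to a vertex of `F`. -/
def hull {n : ℕ} (Λ : Fin n → Fin n → ℕ) (F : Set (Fin n)) : Set (Fin n) :=
  {y | ∃ x, (x ∈ F ∨ ∃ z ∈ F, edges Λ z x ≠ 0) ∧ PathLE Λ x y}

/-- `segs` is a canonical form of `S` (Proposition 2.1): `S ∼ S₁S₂⋯S_r`, each segment
consists of distinct vertices, is nonempty, and `Supp S_i = Supp (S_i S_{i+1} ⋯ S_r)`. -/
def Segments {n : ℕ} (Λ : Fin n → Fin n → ℕ) (S : List (Fin n))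
    (segs : List (List (Fin n))) : Prop :=
  Admissible Λ segs.flatten ∧ Sim (edges Λ) S segs.flatten ∧
  (∀ seg ∈ segs, seg ≠ [] ∧ seg.Nodup) ∧
  ∀ i, i < segs.length → suppOf (segs.getD i []) = suppOf ((segs.drop i).flatten)

/-- `J` is (a representative of) the join `S ∨ T` (Definition 2.4):  the canonical form of `J`
has `Supp R_i = Supp S_i ∪ Supp T_i` (out-of-range segments read as `∅`). -/
def IsJoin {n : ℕ} (Λ : Fin n → Fin n → ℕ) (S T J : List (Fin n)) : Prop :=
  ∃ CS CT CJ, Segments Λ S CS ∧ Segments Λ T CT ∧ Segments Λ J CJ ∧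
    ∀ i, suppOf (CJ.getD i []) = suppOf (CS.getD i []) ∪ suppOf (CT.getD i [])

/-- `M` is (a representative of) the meet `S ∧ T` (Definition 2.4). -/
def IsMeet {n : ℕ} (Λ : Fin n → Fin n → ℕ) (S T M : List (Fin n)) : Prop :=
  ∃ CS CT CM, Segments Λ S CS ∧ Segments Λ T CT ∧ Segments Λ M CM ∧
    ∀ i, suppOf (CM.getD i []) = suppOf (CS.getD i []) ∩ suppOf (CT.getD i [])

/-- `S` is (equivalent to) the join `T₁ ∨ ⋯ ∨ T_l` of the list of sequences `Ts`. -/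
def IsJoinList {n : ℕ} (Λ : Fin n → Fin n → ℕ) : List (List (Fin n)) → List (Fin n) → Prop
  | [], S => S = []
  | T :: Ts, S => ∃ J, IsJoinList Λ Ts J ∧ IsJoin Λ T J S

/-- The segments of a canonical form of a principal sequence `S_{r,x}` (Definition 3.1). -/
def PrincipalSegs {n : ℕ} (Λ : Fin n → Fin n → ℕ) (segs : List (List (Fin n)))
    (r : ℕ) (x : Fin n) : Prop :=
  segs.length = r ∧ 0 < r ∧
  (∀ i, i + 1 < r → suppOf (segs.getD i []) = hull Λ (suppOf (segs.getD (i+1) []))) ∧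
  suppOf (segs.getD (r-1) []) = upSet Λ x

/-- `S ∼ S_{r,x}`, the principal `(+)`-admissible sequence of size `r` with
`Supp S_r = ⟨x⟩`. -/
def IsPrincipalSeq {n : ℕ} (Λ : Fin n → Fin n → ℕ) (r : ℕ) (x : Fin n)
    (S : List (Fin n)) : Prop :=
  ∃ segs, Segments Λ S segs ∧ PrincipalSegs Λ segs r x

/-- `S` is a principal `(+)`-admissible sequence. -/
def IsPrincipal {n : ℕ} (Λ : Fin n → Fin n → ℕ) (S : List (Fin n)) : Prop :=
  ∃ r x, IsPrincipalSeq Λ r x S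


/-! ## Representations of `(Γ, Λ)` over a field `k`. -/

/-- A (finite-dimensional) representation of the quiver `(Γ, Λ)` over `k`:
the space at vertex `x` is `Fin (d x) → k`, and each arrow carries a linear map. -/
structure Rep (k : Type) [Field k] (n : ℕ) (Λ : Fin n → Fin n → ℕ) where
  d : Fin n → ℕ
  f : ∀ a b : Fin n, Fin (Λ a b) → ((Fin (d a) → k) →ₗ[k] (Fin (d b) → k))

variable {k : Type} [Field k] {n : ℕ}

/-- A morphism of representations. -/
structure RepHom {Λ : Fin n → Fin n → ℕ} (M N : Rep k n Λ) where
  g : ∀ x, (Fin (M.d x) → k) →ₗ[k] (Fin (N.d x) → k)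
  comm : ∀ a b i v, g b (M.f a b i v) = N.f a b i (g a v)

/-- Isomorphism of representations. -/
def RepIso {Λ : Fin n → Fin n → ℕ} (M N : Rep k n Λ) : Prop :=
  ∃ g : ∀ x, (Fin (M.d x) → k) ≃ₗ[k] (Fin (N.d x) → k),
    ∀ a b i v, g b (M.f a b i v) = N.f a b i (g a v)

/-- The zero representation. -/
def IsZeroRep {Λ : Fin n → Fin n → ℕ} (M : Rep k n Λ) : Prop := ∀ x, M.d x = 0

/-- Cast between the standard spaces. -/
def castL (k : Type) [Field k] {m m' : ℕ} (h : m = m') : (Fin m → k) ≃ₗ[k] (Fin m' → k) :=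
  LinearEquiv.funCongrLeft k k (finCongr h.symm)

/-- The splitting `(Fin (m + p) → k) ≃ₗ (Fin m → k) × (Fin p → k)`. -/
def splitL (k : Type) [Field k] (m p : ℕ) : (Fin (m + p) → k) ≃ₗ[k] (Fin m → k) × (Fin p → k) :=
  (LinearEquiv.funCongrLeft k k finSumFinEquiv).trans
    (LinearEquiv.sumArrowLequivProdArrow _ _ k k)

/-- Direct sum of two representations. -/
def dSum {Λ : Fin n → Fin n → ℕ} (M N : Rep k n Λ) : Rep k n Λ where
  d x := M.d x + N.d x
  f a b i :=
    (splitL k (M.d b) (N.d b)).symm.toLinearMap ∘ₗ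
      (LinearMap.prodMap (M.f a b i) (N.f a b i)) ∘ₗ (splitL k (M.d a) (N.d a)).toLinearMap

/-- The zero representation (as an object). -/
def zeroRep (k : Type) [Field k] (n : ℕ) (Λ : Fin n → Fin n → ℕ) : Rep k n Λ where
  d _ := 0
  f _ _ _ := 0

/-- Direct sum of a list of representations. -/
def dSumList {Λ : Fin n → Fin n → ℕ} (L : List (Rep k n Λ)) : Rep k n Λ :=
  L.foldr dSum (zeroRep k n Λ)

/-- `M` is indecomposable. -/
def Indecomp {Λ : Fin n → Fin n → ℕ} (M : Rep k n Λ) : Prop :=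
  ¬ IsZeroRep M ∧ ∀ A B : Rep k n Λ, RepIso M (dSum A B) → IsZeroRep A ∨ IsZeroRep B

/-- `X` is a direct summand of `M`. -/
def IsSummand {Λ : Fin n → Fin n → ℕ} (X M : Rep k n Λ) : Prop :=
  ∃ Y, RepIso M (dSum X Y)

/-! ### Reflection functors (on objects) -/

/-- Index type of the arrows ending at `x`. -/
abbrev Arin {n : ℕ} (Λ : Fin n → Fin n → ℕ) (x : Fin n) := Σ y : Fin n, Fin (Λ y x)

/-- Index type of the arrows starting at `x`. -/
abbrev Aout {n : ℕ} (Λ : Fin n → Fin n → ℕ) (x : Fin n) := Σ y : Fin n, Fin (Λ x y)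

/-- The map `h : ⊕_{a : y → x} V(y) → V(x)` induced by the maps along the arrows ending at `x`. -/
noncomputable def inMap (Λ : Fin n → Fin n → ℕ) (M : Rep k n Λ) (x : Fin n) :
    ((p : Arin Λ x) → (Fin (M.d p.1) → k)) →ₗ[k] (Fin (M.d x) → k) :=
  ∑ p : Arin Λ x, (M.f p.1 x p.2) ∘ₗ LinearMap.proj p

/-- The map `h' : V(x) → ⊕_{a : x → y} V(y)` induced by the maps along arrows starting at `x`. -/
def outMap (Λ : Fin n → Fin n → ℕ) (M : Rep k n Λ) (x : Fin n) :
    (Fin (M.d x) → k) →ₗ[k] ((p : Aout Λ x) → (Fin (M.d p.1) → k)) :=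
  LinearMap.pi fun p => M.f x p.1 p.2

noncomputable def kerEquiv (Λ : Fin n → Fin n → ℕ) (M : Rep k n Λ) (x : Fin n) :
    LinearMap.ker (inMap Λ M x) ≃ₗ[k]
      (Fin (Module.finrank k (LinearMap.ker (inMap Λ M x))) → k) :=
  (Module.finBasis k _).equivFun

noncomputable def cokerEquiv (Λ : Fin n → Fin n → ℕ) (M : Rep k n Λ) (x : Fin n) :
    (((p : Aout Λ x) → (Fin (M.d p.1) → k)) ⧸ LinearMap.range (outMap Λ M x)) ≃ₗ[k]
      (Fin (Module.finrank k (((p : Aout Λ x) → (Fin (M.d p.1) → k)) ⧸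
        LinearMap.range (outMap Λ M x))) → k) :=
  (Module.finBasis k _).equivFun

/-- The positive reflection functor `F_x⁺` (on objects): the space at `x` is replaced
by the kernel of `inMap`, with the maps along the reversed arrows induced by inclusion
followed by the projections. -/
noncomputable def reflPlus (x : Fin n) (Λ : Fin n → Fin n → ℕ) (M : Rep k n Λ) :
    Rep k n (flipO x Λ) where
  d z := if z = x then Module.finrank k (LinearMap.ker (inMap Λ M x)) else M.d z
  f a b i :=
    if ha : a = x then
      if hb : b = x then 0
      else
        (castL k (if_neg hb).symm).toLinearMap ∘ₗ
          (LinearMap.proj (φ := fun p : Arin Λ x => Fin (M.d p.1) → k)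
            (⟨b, Fin.cast (by subst ha; simp [flipO]) i⟩ : Arin Λ x)) ∘ₗ
          (LinearMap.ker (inMap Λ M x)).subtype ∘ₗ
          (kerEquiv Λ M x).symm.toLinearMap ∘ₗ (castL k (if_pos ha)).toLinearMap
    else
      if hb : b = x then 0
      else
        (castL k (if_neg hb).symm).toLinearMap ∘ₗ
          M.f a b (Fin.cast (by simp [flipO, ha, hb]) i) ∘ₗ
          (castL k (if_neg ha)).toLinearMap

/-- The negative reflection functor `F_x⁻` (on objects), presented as a map from
representations of `(Γ, σ_x Λ)` to representations of `(Γ, Λ)`: the space at `x` is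
replaced by the cokernel of `outMap`. -/
noncomputable def reflMinus (x : Fin n) (Λ : Fin n → Fin n → ℕ)
    (N : Rep k n (flipO x Λ)) : Rep k n Λ where
  d z := if z = x then
      Module.finrank k (((p : Aout (flipO x Λ) x) → (Fin (N.d p.1) → k)) ⧸
        LinearMap.range (outMap (flipO x Λ) N x))
    else N.d z
  f a b i :=
    if hb : b = x then
      if ha : a = x then 0
      else
        (castL k (if_pos hb).symm).toLinearMap ∘ₗ
          (cokerEquiv (flipO x Λ) N x).toLinearMap ∘ₗ
          (LinearMap.range (outMap (flipO x Λ) N x)).mkQ ∘ₗ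
          (LinearMap.single k (fun p : Aout (flipO x Λ) x => Fin (N.d p.1) → k)
            (⟨a, Fin.cast (by subst hb; simp [flipO]) i⟩ : Aout (flipO x Λ) x)) ∘ₗ
          (castL k (if_neg ha)).toLinearMap
    else
      if ha : a = x then 0
      else
        (castL k (if_neg hb).symm).toLinearMap ∘ₗ
          N.f a b (Fin.cast (by simp [flipO, ha, hb]) i) ∘ₗ
          (castL k (if_neg ha)).toLinearMap

/-- `F(S) = F_{x_s}⁺ ⋯ F_{x_1}⁺` applied to a representation. -/
noncomputable def FList : (S : List (Fin n)) → (Λ : Fin n → Fin n → ℕ) → Rep k n Λ →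
    Rep k n (orientAfter Λ S)
  | [], _, M => M
  | x :: xs, Λ, M => FList xs (flipO x Λ) (reflPlus x Λ M)

/-- `S` annihilates `M` : `F(S) M = 0`. -/
def Annihilates (Λ : Fin n → Fin n → ℕ) (S : List (Fin n)) (M : Rep k n Λ) : Prop :=
  IsZeroRep (FList S Λ M)

/-- `M` is preprojective: some `(+)`-admissible sequence annihilates it. -/
def Preprojective (Λ : Fin n → Fin n → ℕ) (M : Rep k n Λ) : Prop :=
  ∃ S, Admissible Λ S ∧ Annihilates Λ S M

/-- `S` is a shortest `(+)`-admissible sequence annihilating `M` : it annihilates `M` and no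
proper subsequence of `S` annihilates `M`.  (This predicate is invariant under `∼`, so it
expresses `S ∼ S_M`.) -/
def IsShortestAnn (Λ : Fin n → Fin n → ℕ) (M : Rep k n Λ) (S : List (Fin n)) : Prop :=
  Admissible Λ S ∧ Annihilates Λ S M ∧
  ∀ S', Admissible Λ S' → Annihilates Λ S' M → Preceq Λ S' S → Sim (edges Λ) S' S

/-- The simple representation `L_x` concentrated at the vertex `x`. -/
def simpleRep (Λ : Fin n → Fin n → ℕ) (x : Fin n) : Rep k n Λ where
  d z := if z = x then 1 else 0
  f _ _ _ := 0

/-- `M(S) = F_{x₁}⁻ F_{x₂}⁻ ⋯ F_{x_{s-1}}⁻ (L_{x_s})`, where `L_{x_s}` is the simple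
(projective) module over `k(Γ, σ_{x_{s-1}} ⋯ σ_{x_1} Λ)` at the vertex `x_s`. -/
noncomputable def Mof : (Λ : Fin n → Fin n → ℕ) → (S : List (Fin n)) → Rep k n Λ
  | Λ, [] => zeroRep k n Λ
  | Λ, [x] => simpleRep Λ x
  | Λ, x :: y :: ys => reflMinus x Λ (Mof (flipO x Λ) (y :: ys))

variable {n : ℕ}

/-! ## The Weyl group -/

/-- The simple reflection `σ_i` attached to a generalized Cartan matrix `A`,
as a linear endomorphism of `ℤⁿ` : `σ_i(v) = v - (∑ l, a_{il} v_l) e_i`. -/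
def sigmaL (A : Fin n → Fin n → ℤ) (i : Fin n) : (Fin n → ℤ) →ₗ[ℤ] (Fin n → ℤ) where
  toFun v := v - (∑ l, A i l * v l) • Pi.single i 1
  map_add' v w := by
    simp only [Pi.add_apply, mul_add, Finset.sum_add_distrib, add_smul]
    abel
  map_smul' c v := by
    simp only [Pi.smul_apply, smul_eq_mul, RingHom.id_apply, smul_sub]
    congr 1
    rw [smul_smul, Finset.mul_sum]
    congr 1
    exact Finset.sum_congr rfl fun l _ => by ring

theorem sigma_invol (A : Fin n → Fin n → ℤ) (hA : ∀ i, A i i = 2) (i : Fin n) :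
    (sigmaL A i).comp (sigmaL A i) = LinearMap.id := by
  apply LinearMap.ext
  intro v
  simp only [LinearMap.comp_apply, LinearMap.id_apply, sigmaL, LinearMap.coe_mk, AddHom.coe_mk]
  set c := ∑ l, A i l * v l with hc
  set s : Fin n → ℤ := Pi.single i 1 with hs
  have h1 : ∑ l, A i l * (v - c • s) l = -c := by
    have h2 : ∀ l, A i l * (v - c • s) l = A i l * v l - c * (A i l * s l) := fun l => by
      simp only [Pi.sub_apply, Pi.smul_apply, smul_eq_mul]
      ring
    rw [Finset.sum_congr rfl fun l _ => h2 l, Finset.sum_sub_distrib, ← Finset.mul_sum]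
    have h3 : ∑ l, A i l * s l = 2 := by
      rw [Finset.sum_eq_single i]
      · simp [hs, hA i]
      · intro b _ hb
        simp [hs, Pi.single_eq_of_ne hb]
      · simp
    rw [h3, ← hc]
    ring
  rw [h1]
  ext j
  simp only [Pi.sub_apply, Pi.smul_apply, smul_eq_mul]
  ring

/-- The simple reflection `σ_i` as an automorphism of `ℤⁿ`. -/
def sigmaE (A : Fin n → Fin n → ℤ) (hA : ∀ i, A i i = 2) (i : Fin n) :
    (Fin n → ℤ) ≃ₗ[ℤ] (Fin n → ℤ) :=
  LinearEquiv.ofLinear (sigmaL A i) (sigmaL A i) (sigma_invol A hA i) (sigma_invol A hA i)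

/-- The length `ℓ(w)`: the least `l ≥ 0` such that `w` is a product of `l` simple
reflections. -/
noncomputable def wordLen (A : Fin n → Fin n → ℤ) (hA : ∀ i, A i i = 2)
    (w : (Fin n → ℤ) ≃ₗ[ℤ] (Fin n → ℤ)) : ℕ :=
  sInf {l | ∃ ys : List (Fin n), ys.length = l ∧ w = (ys.map (sigmaE A hA)).prod}

/-- The word `w(S) = σ_{x_s} ⋯ σ_{x_1}` associated to a sequence `S = x₁, …, x_s`. -/
def wordOf (A : Fin n → Fin n → ℤ) (hA : ∀ i, A i i = 2) (S : List (Fin n)) :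
    (Fin n → ℤ) ≃ₗ[ℤ] (Fin n → ℤ) :=
  ((S.reverse).map (sigmaE A hA)).prod

/-- The symmetric generalized Cartan matrix of the underlying graph of `(Γ, Λ)`. -/
def cartanOf (Λ : Fin n → Fin n → ℕ) : Fin n → Fin n → ℤ :=
  fun i j => if i = j then 2 else -(edges Λ i j : ℤ)

theorem cartan_diag (Λ : Fin n → Fin n → ℕ) : ∀ i, cartanOf Λ i i = 2 := by
  intro i; simp [cartanOf]

/-- The simple reflections of the Weyl group of the underlying graph of `(Γ, Λ)`. -/
def wSig (Λ : Fin n → Fin n → ℕ) : Fin n → ((Fin n → ℤ) ≃ₗ[ℤ] (Fin n → ℤ)) :=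
  sigmaE (cartanOf Λ) (cartan_diag Λ)

/-- `w(S)` for a sequence of vertices of `(Γ, Λ)`. -/
def wordOfSeq (Λ : Fin n → Fin n → ℕ) (S : List (Fin n)) :
    (Fin n → ℤ) ≃ₗ[ℤ] (Fin n → ℤ) :=
  ((S.reverse).map (wSig Λ)).prod

/-- The word `w(S)` is reduced: `ℓ(w(S))` equals the number of letters of `S`. -/
noncomputable def IsReducedSeq (Λ : Fin n → Fin n → ℕ) (S : List (Fin n)) : Prop :=
  wordLen (cartanOf Λ) (cartan_diag Λ) (wordOfSeq Λ S) = S.length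

/-! ## Dynkin graphs of types A, D, E -/

def edgeA (n : ℕ) : Fin n → Fin n → ℕ := fun i j =>
  if (i : ℕ) + 1 = (j : ℕ) ∨ (j : ℕ) + 1 = (i : ℕ) then 1 else 0

def edgeD (n : ℕ) : Fin n → Fin n → ℕ := fun i j =>
  if ((i : ℕ) = 0 ∧ (j : ℕ) = 2) ∨ ((j : ℕ) = 0 ∧ (i : ℕ) = 2) ∨
     ((i : ℕ) = 1 ∧ (j : ℕ) = 2) ∨ ((j : ℕ) = 1 ∧ (i : ℕ) = 2) ∨
     (2 ≤ (i : ℕ) ∧ (i : ℕ) + 1 = (j : ℕ)) ∨ (2 ≤ (j : ℕ) ∧ (j : ℕ) + 1 = (i : ℕ))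
  then 1 else 0

def edgeE (n : ℕ) : Fin n → Fin n → ℕ := fun i j =>
  if ((i : ℕ) + 1 = (j : ℕ) ∧ (j : ℕ) ≤ n - 2) ∨ ((j : ℕ) + 1 = (i : ℕ) ∧ (i : ℕ) ≤ n - 2) ∨
     ((i : ℕ) = 2 ∧ (j : ℕ) = n - 1) ∨ ((j : ℕ) = 2 ∧ (i : ℕ) = n - 1)
  then 1 else 0

/-- The underlying graph (given by its edge-count function `E`) is a Dynkin diagram of
type `A`, `D`, or `E`. -/
def IsDynkinADE (n : ℕ) (E : Fin n → Fin n → ℕ) : Prop :=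
  ∃ e : Fin n ≃ Fin n,
    (∀ i j, E i j = edgeA n (e i) (e j)) ∨
    (4 ≤ n ∧ ∀ i j, E i j = edgeD n (e i) (e j)) ∨
    ((n = 6 ∨ n = 7 ∨ n = 8) ∧ ∀ i j, E i j = edgeE n (e i) (e j))

/-! ## Coxeter-sortable elements -/

/-- Lexicographic comparison of index tuples. -/
def lexLE {s : ℕ} (ι ι' : Fin s → ℕ) : Prop :=
  ι = ι' ∨ ∃ j, (∀ j', j' < j → ι j' = ι' j') ∧ ι j < ι' j

/-- `w` is `c`-sortable for the Coxeter element determined by the half-infinite word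
`cseq` (with dividers every `blockLen` letters): the lexicographically first subsequence
of `cseq` that is a reduced word for `w` defines a sequence of subsets (between adjacent
dividers) that is decreasing under inclusion. -/
def CSortable (A : Fin n → Fin n → ℤ) (hA : ∀ i, A i i = 2) (cseq : ℕ → Fin n)
    (blockLen : ℕ) (w : (Fin n → ℤ) ≃ₗ[ℤ] (Fin n → ℤ)) : Prop :=
  ∃ (s : ℕ) (ι : Fin s → ℕ), StrictMono ι ∧
    w = ((List.ofFn fun j => cseq (ι j)).map (sigmaE A hA)).prod ∧
    wordLen A hA w = s ∧
    (∀ ι' : Fin s → ℕ, StrictMono ι' →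
      w = ((List.ofFn fun j => cseq (ι' j)).map (sigmaE A hA)).prod → lexLE ι ι') ∧
    ∀ m : ℕ, {a : Fin n | ∃ j, (ι j) / blockLen = m + 1 ∧ cseq (ι j) = a} ⊆
             {a : Fin n | ∃ j, (ι j) / blockLen = m ∧ cseq (ι j) = a}


/-- A nonzero non-isomorphism between representations. -/
def RepStep {k : Type} [Field k] {n : ℕ} {Λ : Fin n → Fin n → ℕ} (X Y : Rep k n Λ) : Prop :=
  ∃ f : RepHom X Y, (∃ x v, f.g x v ≠ 0) ∧ ¬ ∀ x, Function.Bijective (f.g x)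

/-- `v` is a minimal element of `D` in the poset `(Γ₀, Λ)`. -/
def MinimalIn {n : ℕ} (Λ : Fin n → Fin n → ℕ) (D : Set (Fin n)) (v : Fin n) : Prop :=
  v ∈ D ∧ ∀ u ∈ D, PathLE Λ u v → u = v

/-- The pairs `(h, v)` of Proposition 3.2(a): `0 < h ≤ r` and `v` a minimal element of
`Supp S_h \ H_Λ(Supp S_{h+1})` (with `Supp S_{r+1} = ∅`). -/
def JoinPair {n : ℕ} (Λ : Fin n → Fin n → ℕ) (segs : List (List (Fin n)))
    (p : ℕ × Fin n) : Prop :=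
  0 < p.1 ∧ p.1 ≤ segs.length ∧
  MinimalIn Λ (suppOf (segs.getD (p.1 - 1) []) \ hull Λ (suppOf (segs.getD p.1 []))) p.2

/-! Swapping two nonadjacent vertices permutes a sequence, so `∼` preserves multiplicities.
Conversely, let `T = x T'` have the multiplicities of `S`. Then `x` is a sink of `Λ` occurring
in `S`, and no vertex `u` before the first `x` in `S` is adjacent to `x`: at the first occurrence
of `u` the edge between `u` and `x` still points from `u` to `x`, so `u` is not a sink there.
Hence `x` can be moved to the front of `S`, and induction applies on `(Γ, σ_x Λ)`. -/

section AdmissibleSequences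

variable {n : ℕ}

lemma edges_flipO (x : Fin n) (Λ : Fin n → Fin n → ℕ) : edges (flipO x Λ) = edges Λ := by
  funext a b
  simp only [edges, flipO]
  split_ifs <;> omega

lemma flipO_flipO (x : Fin n) (Λ : Fin n → Fin n → ℕ) : flipO x (flipO x Λ) = Λ := by
  funext a b
  simp only [flipO]
  split_ifs <;> tauto

lemma flipO_comm (a b : Fin n) (Λ : Fin n → Fin n → ℕ) :
    flipO a (flipO b Λ) = flipO b (flipO a Λ) := by
  funext u v
  simp only [flipO]
  split_ifs <;> first | rfl | tauto

lemma isSink_flipO {Λ : Fin n → Fin n → ℕ} {x u : Fin n} (hx : IsSink Λ x) (hxu : x ≠ u)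
    (hux : Λ u x = 0) : IsSink (flipO u Λ) x := by
  intro y
  by_cases hyu : y = u
  · simp [flipO, hyu, hux]
  · simp [flipO, hxu, hyu, hx y]

lemma Admissible.of_append {Λ : Fin n → Fin n → ℕ} {A B : List (Fin n)}
    (h : Admissible Λ (A ++ B)) : Admissible Λ A := by
  induction A generalizing Λ with
  | nil => trivial
  | cons a A ih => exact ⟨h.1, ih h.2⟩

lemma Admissible.swap {Λ : Fin n → Fin n → ℕ} {a b : Fin n} {l : List (Fin n)}
    (h : Admissible Λ (a :: b :: l)) (hab : edges Λ a b = 0) :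
    Admissible Λ (b :: a :: l) := by
  obtain ⟨ha, hb, hl⟩ := h
  rcases eq_or_ne a b with rfl | hne
  · exact ⟨ha, hb, hl⟩
  have hba : Λ b a = 0 := by unfold edges at hab; omega
  refine ⟨?_, isSink_flipO ha hne hba, by rwa [flipO_comm]⟩
  rw [← flipO_flipO a Λ]
  exact isSink_flipO hb hne.symm (by simp [flipO, hba])

lemma SwapRel.admissible {Λ : Fin n → Fin n → ℕ} {S T : List (Fin n)}
    (h : SwapRel (edges Λ) S T) (hS : Admissible Λ S) : Admissible Λ T := by
  obtain ⟨l₁, l₂, a, b, hab⟩ := h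
  induction l₁ generalizing Λ with
  | nil => exact hS.swap hab
  | cons x l₁ ih => exact ⟨hS.1, ih (by rwa [edges_flipO]) hS.2⟩

lemma Sim.admissible {Λ : Fin n → Fin n → ℕ} {S T : List (Fin n)}
    (h : Sim (edges Λ) S T) (hS : Admissible Λ S) : Admissible Λ T := by
  induction h with
  | refl => exact hS
  | tail _ hswap ih => exact hswap.admissible ih

lemma Sim.perm {E : Fin n → Fin n → ℕ} {S T : List (Fin n)} (h : Sim E S T) : S.Perm T := by
  induction h with
  | refl => rfl
  | tail _ hswap ih =>
    obtain ⟨l₁, l₂, a, b, _⟩ := hswap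
    exact ih.trans ((List.Perm.swap b a l₂).append_left l₁)

lemma Sim.cons {E : Fin n → Fin n → ℕ} {S T : List (Fin n)} (x : Fin n) (h : Sim E S T) :
    Sim E (x :: S) (x :: T) :=
  Relation.ReflTransGen.lift (x :: ·) (fun _ _ hswap => by
    obtain ⟨l₁, l₂, a, b, hab⟩ := hswap
    exact SwapRel.swap (x :: l₁) l₂ a b hab) _ _ h

lemma sim_append_cons {E : Fin n → Fin n → ℕ} {x : Fin n} {P : List (Fin n)}
    (hP : ∀ u ∈ P, E u x = 0) (R : List (Fin n)) : Sim E (P ++ x :: R) (x :: (P ++ R)) := by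
  induction P with
  | nil => exact Relation.ReflTransGen.refl
  | cons u P ih =>
    have hswap : SwapRel E ([] ++ u :: x :: (P ++ R)) ([] ++ x :: u :: (P ++ R)) :=
      .swap [] _ u x (hP u List.mem_cons_self)
    exact ((ih fun v hv => hP v (List.mem_cons_of_mem u hv)).cons u).tail hswap

lemma Admissible.edges_eq_zero_of_isSink {Λ : Fin n → Fin n → ℕ} {P : List (Fin n)}
    {x : Fin n} (hP : Admissible Λ P) (hx : IsSink Λ x) (hxP : x ∉ P) :
    ∀ u ∈ P, edges Λ u x = 0 := by
  induction P generalizing Λ with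
  | nil => simp
  | cons v P ih =>
    have hxv : x ≠ v := fun h => hxP (h ▸ List.mem_cons_self)
    intro u hu
    rcases List.mem_cons.mp hu with rfl | hu
    · simp [edges, hP.1 x, hx u]
    · rw [← edges_flipO v]
      exact ih hP.2 (isSink_flipO hx hxv (hP.1 x)) (fun h => hxP (List.mem_cons_of_mem v h)) u hu

lemma Admissible.sim_of_perm {Λ : Fin n → Fin n → ℕ} {S T : List (Fin n)}
    (hS : Admissible Λ S) (hT : Admissible Λ T) (hST : S.Perm T) : Sim (edges Λ) S T := by
  induction T generalizing Λ S with
  | nil => rw [List.perm_nil.mp hST]; exact .refl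
  | cons x T ih =>
    obtain ⟨P, R, rfl, hxP⟩ := List.eq_append_cons_of_mem (hST.mem_iff.mpr List.mem_cons_self)
    have hmove : Sim (edges Λ) (P ++ x :: R) (x :: (P ++ R)) :=
      sim_append_cons (hS.of_append.edges_eq_zero_of_isSink hT.1 hxP) R
    have hrest : Sim (edges (flipO x Λ)) (P ++ R) T :=
      ih (hmove.admissible hS).2 hT.2 (List.perm_middle.symm.trans hST).cons_inv
    rw [edges_flipO] at hrest
    exact hmove.trans (hrest.cons x)

end AdmissibleSequences

theorem sim_iff_counts_eq_general
    (n : ℕ) (Λ : Fin n → Fin n → ℕ)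
    (S T : List (Fin n)) (hS : Admissible Λ S) (hT : Admissible Λ T) :
    Sim (edges Λ) S T ↔ ∀ v : Fin n, S.count v = T.count v := by
  rw [← List.perm_iff_count]
  exact ⟨Sim.perm, hS.sim_of_perm hT⟩

theorem sim_iff_counts_eq
    (n : ℕ) (hn : 2 ≤ n) (Λ : Fin n → Fin n → ℕ)
    (hloop : ∀ a, Λ a a = 0)
    (hconn : ∀ a b : Fin n, Relation.ReflTransGen (fun u v => edges Λ u v ≠ 0) a b)
    (hacyc : ∀ a : Fin n, ¬ Relation.TransGen (fun u v => Λ u v ≠ 0) a a)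
    (S T : List (Fin n)) (hS : Admissible Λ S) (hT : Admissible Λ T) :
    Sim (edges Λ) S T ↔ ∀ v : Fin n, S.count v = T.count v :=
  sim_iff_counts_eq_general n Λ S T hS hT

end KP
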